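/- arXiv:2101.01248 — 9 statements merged into one kernel-verified Lean document; each statement's English description precedes it below -/
import Mathlib

section
/- Let ρ be a nonnegative real-valued function on objects of a triangulated category C satisfying translation invariance ρ(ΣX) = ρ(X), additivity ρ(X ⊕ Y) = ρ(X) + ρ(Y), and the triangle inequality ρ(Y) ≤ ρ(X) + ρ(Z) for every exact triangle X → Y → Z. Then the function on morphisms defined by ρ(f : X → Y) := (ρ(X) + ρ(Y) − ρ(cone f))/2 is nonnegative, and for every exact triangle X →f Y →g Z one has ρ(f) + ρ(g) = ρ(id_Y) = ρ(Y). -/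
open CategoryTheory CategoryTheory.Limits CategoryTheory.Pretriangulated

theorem obj₃_le_obj₁_add_obj₂_of_distTriang {C : Type*} [Category C] [Preadditive C]
    [HasZeroObject C] [HasShift C ℤ] [∀ n : ℤ, (shiftFunctor C n).Additive] [Pretriangulated C]
    (ρ : C → ℝ)
    (hshift : ∀ X : C, ρ (X⟦(1 : ℤ)⟧) = ρ X)
    (htriangle : ∀ T ∈ distTriang C, ρ T.obj₂ ≤ ρ T.obj₁ + ρ T.obj₃)
    (T : Triangle C) (hT : T ∈ distTriang C) :
    ρ T.obj₃ ≤ ρ T.obj₁ + ρ T.obj₂ := by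
  have hrot : ρ T.obj₃ ≤ ρ T.obj₂ + ρ (T.obj₁⟦(1 : ℤ)⟧) :=
    htriangle T.rotate (rot_of_distTriang T hT)
  rw [hshift] at hrot
  linarith

variable {C : Type*} [Category C] [Preadditive C] [HasZeroObject C]
  [HasShift C ℤ] [∀ n : ℤ, (CategoryTheory.shiftFunctor C n).Additive] [Pretriangulated C]
  [HasBinaryBiproducts C]

theorem rank_function_on_morphisms_from_objects_general (ρ : C → ℝ)
    (hshift : ∀ X : C, ρ (X⟦(1 : ℤ)⟧) = ρ X)
    (htriangle : ∀ T ∈ distTriang C, ρ T.obj₂ ≤ ρ T.obj₁ + ρ T.obj₃) :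
    ∀ T ∈ distTriang C,
      0 ≤ (ρ T.obj₁ + ρ T.obj₂ - ρ T.obj₃) / 2 ∧
      (ρ T.obj₁ + ρ T.obj₂ - ρ T.obj₃) / 2
        + (ρ T.obj₂ + ρ T.obj₃ - ρ (T.obj₁⟦(1 : ℤ)⟧)) / 2 = ρ T.obj₂ := by
  intro T hT
  have hcone := obj₃_le_obj₁_add_obj₂_of_distTriang ρ hshift htriangle T hT
  rw [hshift T.obj₁]
  exact ⟨by linarith, by ring⟩

/-- From a rank function on objects one gets a nonnegative function on
morphisms via ρ(f) = (ρ X + ρ Y - ρ (cone f))/2, satisfying rank-nullity on exact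
triangles.  For a distinguished triangle (X,Y,Z,f,g,h), cone f = Z and cone g ≅ ΣX. -/
theorem rank_function_on_morphisms_from_objects (ρ : C → ℝ)
    (hnonneg : ∀ X : C, 0 ≤ ρ X)
    (hshift : ∀ X : C, ρ (X⟦(1 : ℤ)⟧) = ρ X)
    (hadd : ∀ X Y : C, ρ (X ⊞ Y) = ρ X + ρ Y)
    (htriangle : ∀ T ∈ distTriang C, ρ T.obj₂ ≤ ρ T.obj₁ + ρ T.obj₃) :
    ∀ T ∈ distTriang C,
      0 ≤ (ρ T.obj₁ + ρ T.obj₂ - ρ T.obj₃) / 2 ∧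
      (ρ T.obj₁ + ρ T.obj₂ - ρ T.obj₃) / 2
        + (ρ T.obj₂ + ρ T.obj₃ - ρ (T.obj₁⟦(1 : ℤ)⟧)) / 2 = ρ T.obj₂ :=
  rank_function_on_morphisms_from_objects_general ρ hshift htriangle
end

section
/- A real Laurent polynomial f(q) = Σ_{n∈ℤ} a_n q^n can be written as f(q) = (1+q)·φ(q) where φ is a Laurent polynomial with nonnegative real coefficients if and only if for every n ∈ ℤ the alternating tail sum Σ_{i≥0} (−1)^i a_{n+i} is nonnegative. -/
/-!
Write `A f n = ∑_{i ≥ 0} (-1)^i a_{n+i}` (`altTailSum`). Then `A f n = a_n - A f (n+1)`, and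
multiplying by `q` shifts `A` by one, so `A ((1 + q) φ) n = φ_{n-1}`: the quotient by `1 + q` is
read off from the tail sums. Conversely, if all `A f n ≥ 0`, then `a_n = 0` forces
`A f n = -A f (n+1)`, hence `A f n = 0`; so `n ↦ A f (n+1)` has finite support and is the
required quotient `φ`.
-/

open LaurentPolynomial

namespace LaurentPolynomial

theorem coeff_T_mul {R : Type*} [Semiring R] (f : R[T;T⁻¹]) (n m : ℤ) :
    (T n * f).coeff m = f.coeff (m - n) := by
  rw [T, AddMonoidAlgebra.coeff_single_mul_apply, one_mul, neg_add_eq_sub]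

theorem coeff_one_add_T_one_mul {R : Type*} [Semiring R] (f : R[T;T⁻¹]) (m : ℤ) :
    ((1 + T 1) * f).coeff m = f.coeff m + f.coeff (m - 1) := by
  rw [add_mul, one_mul, AddMonoidAlgebra.coeff_add, Finsupp.add_apply, coeff_T_mul]

section AltTailSum

variable {R : Type*} [Ring R] [TopologicalSpace R]

noncomputable def altTailSum (f : R[T;T⁻¹]) (n : ℤ) : R :=
  ∑' i : ℕ, (-1 : R) ^ i * f.coeff (n + i)

theorem summable_altTailSum (f : R[T;T⁻¹]) (n : ℤ) :
    Summable fun i : ℕ => (-1 : R) ^ i * f.coeff (n + i) := by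
  refine summable_of_ne_finset_zero (s := f.coeff.support.image fun m => (m - n).toNat) ?_
  intro i hi
  have : f.coeff (n + i) = 0 := by
    by_contra h
    exact hi (Finset.mem_image.2 ⟨n + i, Finsupp.mem_support_iff.2 h, by simp⟩)
  simp [this]

theorem altTailSum_T_mul (f : R[T;T⁻¹]) (k n : ℤ) :
    altTailSum (T k * f) n = altTailSum f (n - k) := by
  simp only [altTailSum, coeff_T_mul, sub_add_eq_add_sub]

theorem exists_coeff_eq_altTailSum_add_one {f : R[T;T⁻¹]}
    (hf : ∀ n, f.coeff n = 0 → altTailSum f n = 0) :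
    ∃ φ : R[T;T⁻¹], ∀ n, φ.coeff n = altTailSum f (n + 1) := by
  refine ⟨.ofCoeff (.onFinset (f.coeff.support.image (· - 1)) (fun n => altTailSum f (n + 1)) ?_),
    fun n => rfl⟩
  intro n hn
  exact Finset.mem_image.2 ⟨n + 1, Finsupp.mem_support_iff.2 fun h => hn (hf _ h), by simp⟩

variable [IsTopologicalAddGroup R] [T2Space R]

theorem altTailSum_eq_coeff_sub (f : R[T;T⁻¹]) (n : ℤ) :
    altTailSum f n = f.coeff n - altTailSum f (n + 1) := by
  have shift (i : ℕ) : (-1 : R) ^ (i + 1) * f.coeff (n + (i + 1 : ℕ)) =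
      -((-1 : R) ^ i * f.coeff (n + 1 + i)) := by
    rw [pow_succ, mul_neg_one, neg_mul, Nat.cast_succ, ← add_assoc, add_right_comm n]
  rw [altTailSum, (summable_altTailSum f n).tsum_eq_zero_add, tsum_congr shift, tsum_neg]
  simp [altTailSum, sub_eq_add_neg]

theorem altTailSum_add (f g : R[T;T⁻¹]) (n : ℤ) :
    altTailSum (f + g) n = altTailSum f n + altTailSum g n := by
  rw [altTailSum, altTailSum, altTailSum,
    ← (summable_altTailSum f n).tsum_add (summable_altTailSum g n)]
  simp only [AddMonoidAlgebra.coeff_add, Finsupp.coe_add, Pi.add_apply, mul_add]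

theorem altTailSum_one_add_T_one_mul (f : R[T;T⁻¹]) (n : ℤ) :
    altTailSum ((1 + T 1) * f) n = f.coeff (n - 1) := by
  rw [add_mul, one_mul, altTailSum_add, altTailSum_T_mul, altTailSum_eq_coeff_sub f (n - 1),
    sub_add_cancel, add_sub_cancel]

theorem eq_one_add_T_one_mul_of_coeff_eq_altTailSum {f φ : R[T;T⁻¹]}
    (hφ : ∀ n, φ.coeff n = altTailSum f (n + 1)) : f = (1 + T 1) * φ := by
  refine LaurentPolynomial.ext fun m => ?_
  rw [coeff_one_add_T_one_mul, hφ, hφ, sub_add_cancel, altTailSum_eq_coeff_sub f m, add_sub_cancel]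

theorem altTailSum_eq_zero_of_coeff_eq_zero [PartialOrder R] [IsOrderedAddMonoid R]
    {f : R[T;T⁻¹]} (hf : ∀ n, 0 ≤ altTailSum f n) {n : ℤ} (hn : f.coeff n = 0) :
    altTailSum f n = 0 := by
  have hsum : altTailSum f n + altTailSum f (n + 1) = 0 := by
    rw [altTailSum_eq_coeff_sub f n, hn, zero_sub, neg_add_cancel]
  exact ((add_eq_zero_iff_of_nonneg (hf n) (hf (n + 1))).1 hsum).1

end AltTailSum

end LaurentPolynomial

/-- a real Laurent polynomial f is divisible by 1 + q with quotient having
nonnegative coefficients iff all the alternating tail sums Σ_{i≥0} (-1)^i a_{n+i} of its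
coefficients are nonnegative. -/
theorem laurent_divisible_by_one_add_q_iff (f : LaurentPolynomial ℝ) :
    (∃ φ : LaurentPolynomial ℝ, (∀ n : ℤ, 0 ≤ φ.coeff n) ∧ f = (1 + T 1) * φ) ↔
      ∀ n : ℤ, 0 ≤ ∑' i : ℕ, (-1 : ℝ) ^ i * f.coeff (n + (i : ℤ)) := by
  constructor
  · rintro ⟨φ, hφ, rfl⟩ n
    show 0 ≤ altTailSum _ n
    rw [altTailSum_one_add_T_one_mul]
    exact hφ (n - 1)
  · intro hf
    obtain ⟨φ, hφ⟩ :=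
      exists_coeff_eq_altTailSum_add_one fun _ => altTailSum_eq_zero_of_coeff_eq_zero hf
    exact ⟨φ, fun n => hφ n ▸ hf (n + 1), eq_one_add_T_one_mul_of_coeff_eq_altTailSum hφ⟩
end

section
/- Let ρ be a rank function on a triangulated category C, and let f : X → Y and g : Y → Z be morphisms with f ρ-full (i.e. ρ(f) = ρ(id_X) = ρ(id_Y)). Then ρ(gf) = ρ(g). Dually, if g is ρ-full then ρ(gf) = ρ(f). -/
open CategoryTheory CategoryTheory.Limits CategoryTheory.Pretriangulated

variable {C : Type*} [Category C] [Preadditive C] [HasZeroObject C]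
  [HasShift C ℤ] [∀ n : ℤ, (CategoryTheory.shiftFunctor C n).Additive] [Pretriangulated C]
  [HasBinaryBiproducts C]

/-- The key matrix factorization: the matrix [[f,1],[0,g]] factors through
the diagonal matrix diag(f ≫ g, 𝟙 Y). -/
lemma matrix_factorization {X Y Z : C} (f : X ⟶ Y) (g : Y ⟶ Z) :
    biprod.map f g + biprod.snd ≫ 𝟙 Y ≫ biprod.inl =
    (𝟙 (X ⊞ Y) + biprod.fst ≫ f ≫ biprod.inr) ≫ biprod.map (f ≫ g) (𝟙 Y) ≫
      (biprod.snd ≫ biprod.inl - biprod.fst ≫ biprod.inr) ≫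
      (𝟙 (Y ⊞ Z) + biprod.fst ≫ g ≫ biprod.inr) := by
  ext <;> simp

/-- composing with a ρ-full morphism does not change the rank. -/
theorem rank_comp_full (ρ : ∀ ⦃X Y : C⦄, (X ⟶ Y) → ℝ)
    (hnonneg : ∀ ⦃X Y : C⦄ (f : X ⟶ Y), 0 ≤ ρ f)
    (hM1 : ∀ ⦃X Y : C⦄ (f : X ⟶ Y), ρ (f⟦(1 : ℤ)⟧') = ρ f)
    (hM2 : ∀ ⦃X Y X' Y' : C⦄ (f : X ⟶ Y) (g : X' ⟶ Y'),
      ρ (biprod.map f g) = ρ f + ρ g)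
    (hM3 : ∀ T ∈ distTriang C, ρ T.mor₁ + ρ T.mor₂ = ρ (𝟙 T.obj₂))
    (hM4 : ∀ ⦃X Y Z W : C⦄ (f : X ⟶ Y) (g : Z ⟶ W) (h : Z ⟶ Y),
      ρ f + ρ g ≤ ρ (biprod.map f g + biprod.snd ≫ h ≫ biprod.inl))
    (hM5 : ∀ ⦃X Y Z : C⦄ (f : X ⟶ Y) (g : Y ⟶ Z),
      ρ (f ≫ g) ≤ ρ f ∧ ρ (f ≫ g) ≤ ρ g) :
    ∀ ⦃X Y Z : C⦄ (f : X ⟶ Y) (g : Y ⟶ Z),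
      ((ρ f = ρ (𝟙 X) ∧ ρ f = ρ (𝟙 Y)) → ρ (f ≫ g) = ρ g) ∧
      ((ρ g = ρ (𝟙 Y) ∧ ρ g = ρ (𝟙 Z)) → ρ (f ≫ g) = ρ f) := by
  -- Key inequality: ρ f + ρ g ≤ ρ (f ≫ g) + ρ (𝟙 Y)
  have key : ∀ ⦃X Y Z : C⦄ (f : X ⟶ Y) (g : Y ⟶ Z),
      ρ f + ρ g ≤ ρ (f ≫ g) + ρ (𝟙 Y) := by
    intro X Y Z f g
    have h1 := hM4 f g (𝟙 Y)
    rw [matrix_factorization f g] at h1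
    have h2 : ρ ((𝟙 (X ⊞ Y) + biprod.fst ≫ f ≫ biprod.inr) ≫ biprod.map (f ≫ g) (𝟙 Y) ≫
        (biprod.snd ≫ biprod.inl - biprod.fst ≫ biprod.inr) ≫
        (𝟙 (Y ⊞ Z) + biprod.fst ≫ g ≫ biprod.inr)) ≤ ρ (biprod.map (f ≫ g) (𝟙 Y)) := by
      refine le_trans (hM5 _ _).2 ?_
      rw [← Category.assoc]
      refine le_trans (hM5 _ _).1 (hM5 _ _).1
    have h3 := hM2 (f ≫ g) (𝟙 Y)
    linarith
  intro X Y Z f g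
  constructor
  · rintro ⟨_, hfY⟩
    have h1 := key f g
    have h2 := (hM5 f g).2
    linarith
  · rintro ⟨hgY, _⟩
    have h1 := key f g
    have h2 := (hM5 f g).1
    linarith
end

section
/- Let ρ be a rank function on a triangulated category C, and let X →f Y →g Z be an exact triangle with connecting morphism h : Σ⁻¹Z → X. Then: (a) ρ(f) = ρ(id_X) if and only if ρ(g) = ρ(id_Z) shifted appropriately, namely both are equivalent to ρ(h) = 0; and (b) f is ρ-full if and only if ρ(id_Z) = 0. -/
open CategoryTheory CategoryTheory.Limits CategoryTheory.Pretriangulated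

variable {C : Type*} [Category C] [Preadditive C] [HasZeroObject C]
  [HasShift C ℤ] [∀ n : ℤ, (CategoryTheory.shiftFunctor C n).Additive] [Pretriangulated C]
  [HasBinaryBiproducts C]

/-! Rotating an exact triangle `X →f Y →g Z →h X⟦1⟧` once and twice, additivity on triangles
and shift invariance give the three relations `ρ f + ρ g = ρ 1_Y`, `ρ g + ρ h = ρ 1_Z` and
`ρ h + ρ f = ρ 1_X`; with `ρ ≥ 0` the theorem is linear arithmetic in these. -/

namespace RankFunction

omit [HasBinaryBiproducts C]

variable (ρ : ∀ ⦃X Y : C⦄, (X ⟶ Y) → ℝ)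

/-- `-𝟙` on the first vertex identifies `Triangle.mk (-f) g (-h)` with `Triangle.mk f g h`,
so `-f` and `f` share the complementary rank `ρ g`. -/
lemma rank_neg (hρ : ∀ T ∈ distTriang C, ρ T.mor₁ + ρ T.mor₂ = ρ (𝟙 T.obj₂))
    {X Y : C} (f : X ⟶ Y) : ρ (-f) = ρ f := by
  obtain ⟨Z, g, h, hT⟩ := distinguished_cocone_triangle f
  have hT' : Triangle.mk (-f) g (-h) ∈ distTriang C := by
    refine isomorphic_distinguished _ hT _
      (Triangle.isoMk _ _ (-Iso.refl X) (Iso.refl Y) (Iso.refl Z) ?_ ?_ ?_)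
    · show (-f) ≫ 𝟙 Y = (-𝟙 X) ≫ f
      simp
    · show g ≫ 𝟙 Z = 𝟙 Y ≫ g
      simp
    · show (-h) ≫ (-𝟙 X)⟦(1 : ℤ)⟧' = 𝟙 Z ≫ h
      simp
  have hf : ρ f + ρ g = ρ (𝟙 Y) := hρ _ hT
  have hnegf : ρ (-f) + ρ g = ρ (𝟙 Y) := hρ _ hT'
  linarith

lemma rank_mor₂_add_rank_mor₃ (hρ : ∀ T ∈ distTriang C, ρ T.mor₁ + ρ T.mor₂ = ρ (𝟙 T.obj₂))
    (T : Triangle C) (hT : T ∈ distTriang C) :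
    ρ T.mor₂ + ρ T.mor₃ = ρ (𝟙 T.obj₃) :=
  hρ _ (rot_of_distTriang _ hT)

lemma rank_mor₃_add_rank_mor₁ (hρ : ∀ T ∈ distTriang C, ρ T.mor₁ + ρ T.mor₂ = ρ (𝟙 T.obj₂))
    (hshift : ∀ ⦃X Y : C⦄ (f : X ⟶ Y), ρ (f⟦(1 : ℤ)⟧') = ρ f)
    (T : Triangle C) (hT : T ∈ distTriang C) :
    ρ T.mor₃ + ρ T.mor₁ = ρ (𝟙 T.obj₁) := by
  have h : ρ T.mor₃ + ρ (-T.mor₁⟦(1 : ℤ)⟧') = ρ (𝟙 (T.obj₁⟦(1 : ℤ)⟧)) :=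
    hρ _ (rot_of_distTriang _ (rot_of_distTriang _ hT))
  rwa [rank_neg ρ hρ, hshift, ← (shiftFunctor C (1 : ℤ)).map_id, hshift] at h

end RankFunction

theorem full_iff_connecting_rank_zero_general (ρ : ∀ ⦃X Y : C⦄, (X ⟶ Y) → ℝ)
    (hnonneg : ∀ ⦃X Y : C⦄ (f : X ⟶ Y), 0 ≤ ρ f)
    (hM1 : ∀ ⦃X Y : C⦄ (f : X ⟶ Y), ρ (f⟦(1 : ℤ)⟧') = ρ f)
    (hM3 : ∀ T ∈ distTriang C, ρ T.mor₁ + ρ T.mor₂ = ρ (𝟙 T.obj₂)) :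
    ∀ T ∈ distTriang C,
      (ρ T.mor₁ = ρ (𝟙 T.obj₁) ↔ ρ T.mor₃ = 0) ∧
      (ρ T.mor₂ = ρ (𝟙 T.obj₃) ↔ ρ T.mor₃ = 0) ∧
      ((ρ T.mor₁ = ρ (𝟙 T.obj₁) ∧ ρ T.mor₁ = ρ (𝟙 T.obj₂)) ↔ ρ (𝟙 T.obj₃) = 0) := by
  intro T hT
  have h₁₂ := hM3 T hT
  have h₂₃ := RankFunction.rank_mor₂_add_rank_mor₃ ρ hM3 T hT
  have h₃₁ := RankFunction.rank_mor₃_add_rank_mor₁ ρ hM3 hM1 T hT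
  have n₁ := hnonneg T.mor₁
  have n₂ := hnonneg T.mor₂
  have n₃ := hnonneg T.mor₃
  refine ⟨⟨fun _ => by linarith, fun _ => by linarith⟩, ⟨fun _ => by linarith, fun _ => by linarith⟩,
    ⟨fun ⟨_, _⟩ => by linarith, fun _ => ⟨by linarith, by linarith⟩⟩⟩

/-- in an exact triangle (X,Y,Z,f,g,h) with connecting morphism
(represented by mor₃, whose rank equals that of the connecting morphism Σ⁻¹Z ⟶ X by
translation invariance): f is left ρ-full iff g is right ρ-full iff ρ(mor₃) = 0;
and f is ρ-full iff ρ(id Z) = 0. -/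
theorem full_iff_connecting_rank_zero (ρ : ∀ ⦃X Y : C⦄, (X ⟶ Y) → ℝ)
    (hnonneg : ∀ ⦃X Y : C⦄ (f : X ⟶ Y), 0 ≤ ρ f)
    (hM1 : ∀ ⦃X Y : C⦄ (f : X ⟶ Y), ρ (f⟦(1 : ℤ)⟧') = ρ f)
    (hM2 : ∀ ⦃X Y X' Y' : C⦄ (f : X ⟶ Y) (g : X' ⟶ Y'),
      ρ (biprod.map f g) = ρ f + ρ g)
    (hM3 : ∀ T ∈ distTriang C, ρ T.mor₁ + ρ T.mor₂ = ρ (𝟙 T.obj₂)) :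
    ∀ T ∈ distTriang C,
      (ρ T.mor₁ = ρ (𝟙 T.obj₁) ↔ ρ T.mor₃ = 0) ∧
      (ρ T.mor₂ = ρ (𝟙 T.obj₃) ↔ ρ T.mor₃ = 0) ∧
      ((ρ T.mor₁ = ρ (𝟙 T.obj₁) ∧ ρ T.mor₁ = ρ (𝟙 T.obj₂)) ↔ ρ (𝟙 T.obj₃) = 0) :=
  full_iff_connecting_rank_zero_general ρ hnonneg hM1 hM3
end

section
/- Every rank function ρ on a triangulated category C extends to a rank function on the idempotent completion of C, by assigning to a morphism f : (X,e) → (Y,t) the value ρ(f : X → Y), and the rank of the identity of (X,e) equals ρ(e). In particular, for an idempotent endomorphism t of Y with a splitting triangle arising from a triangle (X,e) →f (Y,t) →g (Z,k) in the idempotent completion, one has ρ(t) = ρ(f) + ρ(g). -/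
open CategoryTheory CategoryTheory.Limits CategoryTheory.Pretriangulated

/-!
The retraction data give an endomorphism `p = r ≫ i ≫ r ≫ i` of the distinguished triangle `T`
whose middle component `r₂ ≫ t ≫ i₂` is idempotent and has the same rank as `t`. Additivity and
the ideal condition split the rank of each morphism of `T` along `p` and `1 - p`; the triangular
inequality bounds each summand, so rank-nullity for `T` forces
`ρ p₂ = ρ (T.mor₁ ≫ p₂) + ρ (p₂ ≫ T.mor₂)`. These two terms are at most `ρ f` and `ρ g`, while
`ρ f + ρ g ≤ ρ t` by the triangular inequality, since `f ≫ g = 0`.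
-/

lemma rank_comp_comp_le {C : Type*} [Category C] (ρ : ∀ ⦃X Y : C⦄, (X ⟶ Y) → ℝ)
    (hM5 : ∀ ⦃X Y Z : C⦄ (f : X ⟶ Y) (g : Y ⟶ Z), ρ (f ≫ g) ≤ ρ f ∧ ρ (f ≫ g) ≤ ρ g)
    {A B D E : C} (u : A ⟶ B) (m : B ⟶ D) (v : D ⟶ E) :
    ρ (u ≫ m ≫ v) ≤ ρ m :=
  (hM5 u (m ≫ v)).2.trans (hM5 m v).1

/-- `m` and `biprod.map (m ≫ s) (m ≫ (𝟙 B - s))` factor through each other. -/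
lemma rank_eq_rank_comp_add_rank_comp_sub {C : Type*} [Category C] [Preadditive C]
    [HasBinaryBiproducts C] (ρ : ∀ ⦃X Y : C⦄, (X ⟶ Y) → ℝ)
    (hM2 : ∀ ⦃X Y X' Y' : C⦄ (f : X ⟶ Y) (g : X' ⟶ Y'), ρ (biprod.map f g) = ρ f + ρ g)
    (hM5 : ∀ ⦃X Y Z : C⦄ (f : X ⟶ Y) (g : Y ⟶ Z), ρ (f ≫ g) ≤ ρ f ∧ ρ (f ≫ g) ≤ ρ g)
    {A B : C} (q : A ⟶ A) (m : A ⟶ B) (s : B ⟶ B)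
    (hm : m ≫ s = q ≫ m) (hs : m ≫ s ≫ s = m ≫ s) :
    ρ m = ρ (m ≫ s) + ρ (m ≫ (𝟙 B - s)) := by
  have split : biprod.lift (𝟙 A) (𝟙 A) ≫ biprod.map (m ≫ s) (m ≫ (𝟙 B - s)) ≫
      biprod.desc s (𝟙 B - s) = m := by
    simp [biprod.map_eq, Preadditive.comp_sub, Preadditive.sub_comp, hs]
  have diag : biprod.desc q (𝟙 A - q) ≫ m ≫ biprod.lift s (𝟙 B - s) =
      biprod.map (m ≫ s) (m ≫ (𝟙 B - s)) := by
    apply biprod.hom_ext' <;> apply biprod.hom_ext <;>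
      simp [Preadditive.comp_sub, Preadditive.sub_comp, ← reassoc_of% hm, hs]
  apply le_antisymm
  · calc ρ m = ρ (biprod.lift (𝟙 A) (𝟙 A) ≫ biprod.map (m ≫ s) (m ≫ (𝟙 B - s)) ≫
          biprod.desc s (𝟙 B - s)) := by rw [split]
      _ ≤ _ := rank_comp_comp_le ρ hM5 _ _ _
      _ = _ := hM2 _ _
  · calc ρ (m ≫ s) + ρ (m ≫ (𝟙 B - s)) = ρ (biprod.map (m ≫ s) (m ≫ (𝟙 B - s))) :=
          (hM2 _ _).symm
      _ = ρ (biprod.desc q (𝟙 A - q) ≫ m ≫ biprod.lift s (𝟙 B - s)) := by rw [diag]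
      _ ≤ ρ m := rank_comp_comp_le ρ hM5 _ _ _

lemma rank_add_rank_le_of_comp_eq_zero {C : Type*} [Category C] [Preadditive C]
    [HasBinaryBiproducts C] (ρ : ∀ ⦃X Y : C⦄, (X ⟶ Y) → ℝ)
    (hM4 : ∀ ⦃X Y Z W : C⦄ (f : X ⟶ Y) (g : Z ⟶ W) (h : Z ⟶ Y),
      ρ f + ρ g ≤ ρ (biprod.map f g + biprod.snd ≫ h ≫ biprod.inl))
    (hM5 : ∀ ⦃X Y Z : C⦄ (f : X ⟶ Y) (g : Y ⟶ Z), ρ (f ≫ g) ≤ ρ f ∧ ρ (f ≫ g) ≤ ρ g)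
    {A B D : C} (a : A ⟶ B) (b : B ⟶ D) (s : B ⟶ B)
    (has : a ≫ s = a) (hsb : s ≫ b = b) (hab : a ≫ b = 0) :
    ρ a + ρ b ≤ ρ s := by
  have factor : biprod.map a b + biprod.snd ≫ s ≫ biprod.inl =
      biprod.desc a (𝟙 B) ≫ s ≫ biprod.lift (𝟙 B) b := by
    apply biprod.hom_ext' <;> apply biprod.hom_ext <;> simp [reassoc_of% has, hsb, hab]
  calc ρ a + ρ b ≤ ρ (biprod.map a b + biprod.snd ≫ s ≫ biprod.inl) := hM4 a b s
    _ = ρ (biprod.desc a (𝟙 B) ≫ s ≫ biprod.lift (𝟙 B) b) := by rw [factor]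
    _ ≤ ρ s := rank_comp_comp_le ρ hM5 _ _ _

variable {C : Type*} [Category C] [Preadditive C] [HasZeroObject C]
  [HasShift C ℤ] [∀ n : ℤ, (CategoryTheory.shiftFunctor C n).Additive] [Pretriangulated C]
  [HasBinaryBiproducts C]

/-- Rank-nullity for the direct summand of a distinguished triangle cut out by an idempotent. -/
lemma rank_mor₁_comp_add_rank_comp_mor₂ (ρ : ∀ ⦃X Y : C⦄, (X ⟶ Y) → ℝ)
    (hM2 : ∀ ⦃X Y X' Y' : C⦄ (f : X ⟶ Y) (g : X' ⟶ Y'), ρ (biprod.map f g) = ρ f + ρ g)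
    (hM3 : ∀ T ∈ distTriang C, ρ T.mor₁ + ρ T.mor₂ = ρ (𝟙 T.obj₂))
    (hM4 : ∀ ⦃X Y Z W : C⦄ (f : X ⟶ Y) (g : Z ⟶ W) (h : Z ⟶ Y),
      ρ f + ρ g ≤ ρ (biprod.map f g + biprod.snd ≫ h ≫ biprod.inl))
    (hM5 : ∀ ⦃X Y Z : C⦄ (f : X ⟶ Y) (g : Y ⟶ Z), ρ (f ≫ g) ≤ ρ f ∧ ρ (f ≫ g) ≤ ρ g)
    {T : Triangle C} (hT : T ∈ distTriang C) (p : T ⟶ T) (hp : p.hom₂ ≫ p.hom₂ = p.hom₂) :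
    ρ (T.mor₁ ≫ p.hom₂) + ρ (p.hom₂ ≫ T.mor₂) = ρ p.hom₂ := by
  have hmor₂ : T.mor₂ ≫ p.hom₃ ≫ p.hom₃ = T.mor₂ ≫ p.hom₃ := by
    rw [reassoc_of% p.comm₂, p.comm₂, reassoc_of% hp]
  have half : ∀ (s : T.obj₂ ⟶ T.obj₂) (s₃ : T.obj₃ ⟶ T.obj₃), s ≫ s = s →
      T.mor₂ ≫ s₃ = s ≫ T.mor₂ → ρ (T.mor₁ ≫ s) + ρ (s ≫ T.mor₂) ≤ ρ s := by
    intro s s₃ hs hs₃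
    refine rank_add_rank_le_of_comp_eq_zero ρ hM4 hM5 _ _ s (by simp [hs])
      (by simp [reassoc_of% hs]) ?_
    rw [Category.assoc, reassoc_of% hs, ← hs₃, comp_distTriang_mor_zero₁₂_assoc T hT, zero_comp]
  have hp_compl : T.mor₂ ≫ (𝟙 _ - p.hom₃) = (𝟙 _ - p.hom₂) ≫ T.mor₂ := by
    simp only [Preadditive.sub_comp, Preadditive.comp_sub, Category.id_comp, Category.comp_id,
      p.comm₂]
  have hp_compl_idem : (𝟙 _ - p.hom₂) ≫ (𝟙 _ - p.hom₂) = 𝟙 _ - p.hom₂ := by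
    simp only [Preadditive.sub_comp, Preadditive.comp_sub, Category.id_comp, Category.comp_id,
      hp, sub_self, sub_zero]
  have h₁ := rank_eq_rank_comp_add_rank_comp_sub ρ hM2 hM5 p.hom₁ T.mor₁ p.hom₂ p.comm₁
    (by rw [hp])
  have h₂ := rank_eq_rank_comp_add_rank_comp_sub ρ hM2 hM5 p.hom₂ T.mor₂ p.hom₃ p.comm₂ hmor₂
  have h₃ := rank_eq_rank_comp_add_rank_comp_sub ρ hM2 hM5 p.hom₂ (𝟙 _) p.hom₂
    (by simp only [Category.id_comp, Category.comp_id]) (by simp only [Category.id_comp, hp])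
  have le₁ := half p.hom₂ p.hom₃ hp p.comm₂
  have le₂ := half (𝟙 _ - p.hom₂) (𝟙 _ - p.hom₃) hp_compl_idem hp_compl
  rw [p.comm₂, hp_compl] at h₂
  simp only [Category.id_comp] at h₃
  linarith [hM3 T hT]

lemma rank_eq_rank_mor₁_add_rank_mor₂_of_retract (ρ : ∀ ⦃X Y : C⦄, (X ⟶ Y) → ℝ)
    (hM2 : ∀ ⦃X Y X' Y' : C⦄ (f : X ⟶ Y) (g : X' ⟶ Y'), ρ (biprod.map f g) = ρ f + ρ g)
    (hM3 : ∀ T ∈ distTriang C, ρ T.mor₁ + ρ T.mor₂ = ρ (𝟙 T.obj₂))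
    (hM4 : ∀ ⦃X Y Z W : C⦄ (f : X ⟶ Y) (g : Z ⟶ W) (h : Z ⟶ Y),
      ρ f + ρ g ≤ ρ (biprod.map f g + biprod.snd ≫ h ≫ biprod.inl))
    (hM5 : ∀ ⦃X Y Z : C⦄ (f : X ⟶ Y) (g : Y ⟶ Z), ρ (f ≫ g) ≤ ρ f ∧ ρ (f ≫ g) ≤ ρ g)
    {S T : Triangle C} (hT : T ∈ distTriang C) (i : S ⟶ T) (r : T ⟶ S) (t : S.obj₂ ⟶ S.obj₂)
    (hir : i.hom₂ ≫ r.hom₂ = t) (ht : t ≫ t = t) (hft : S.mor₁ ≫ t = S.mor₁)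
    (htg : t ≫ S.mor₂ = S.mor₂) :
    ρ t = ρ S.mor₁ + ρ S.mor₂ := by
  set p := r ≫ i ≫ r ≫ i
  have hp : p.hom₂ = r.hom₂ ≫ t ≫ i.hom₂ := by simp [p, ← hir]
  have hp_idem : p.hom₂ ≫ p.hom₂ = p.hom₂ := by simp [hp, reassoc_of% hir, reassoc_of% ht]
  have hfg : S.mor₁ ≫ S.mor₂ = 0 := by
    rw [← hft, Category.assoc, ← hir, Category.assoc, ← r.comm₂, reassoc_of% i.comm₁,
      comp_distTriang_mor_zero₁₂_assoc T hT, zero_comp, comp_zero]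
  have le_f : ρ (T.mor₁ ≫ p.hom₂) ≤ ρ S.mor₁ := by
    rw [hp, reassoc_of% r.comm₁, reassoc_of% hft]
    exact rank_comp_comp_le ρ hM5 _ _ _
  have le_g : ρ (p.hom₂ ≫ T.mor₂) ≤ ρ S.mor₂ := by
    rw [hp, Category.assoc, Category.assoc, ← i.comm₂, reassoc_of% htg]
    exact rank_comp_comp_le ρ hM5 _ _ _
  have le_t : ρ t ≤ ρ p.hom₂ := by
    calc ρ t = ρ (i.hom₂ ≫ p.hom₂ ≫ r.hom₂) := by simp [hp, reassoc_of% hir, hir, ht]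
      _ ≤ ρ p.hom₂ := rank_comp_comp_le ρ hM5 _ _ _
  linarith [rank_mor₁_comp_add_rank_comp_mor₂ ρ hM2 hM3 hM4 hM5 hT p hp_idem,
    rank_add_rank_le_of_comp_eq_zero ρ hM4 hM5 _ _ _ hft htg hfg]

theorem rank_idempotent_completion_general (ρ : ∀ ⦃X Y : C⦄, (X ⟶ Y) → ℝ)
    (hM2 : ∀ ⦃X Y X' Y' : C⦄ (f : X ⟶ Y) (g : X' ⟶ Y'),
      ρ (biprod.map f g) = ρ f + ρ g)
    (hM3 : ∀ T ∈ distTriang C, ρ T.mor₁ + ρ T.mor₂ = ρ (𝟙 T.obj₂))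
    (hM4 : ∀ ⦃X Y Z W : C⦄ (f : X ⟶ Y) (g : Z ⟶ W) (h : Z ⟶ Y),
      ρ f + ρ g ≤ ρ (biprod.map f g + biprod.snd ≫ h ≫ biprod.inl))
    (hM5 : ∀ ⦃X Y Z : C⦄ (f : X ⟶ Y) (g : Y ⟶ Z),
      ρ (f ≫ g) ≤ ρ f ∧ ρ (f ≫ g) ≤ ρ g)
    {X Y Z : C} (t : Y ⟶ Y)
    (ht : t ≫ t = t)
    (f : X ⟶ Y) (g : Y ⟶ Z) (h : Z ⟶ X⟦(1 : ℤ)⟧)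
    (hft : f ≫ t = f) (htg : t ≫ g = g)
    (T : Triangle C) (hT : T ∈ distTriang C)
    (i : Triangle.mk f g h ⟶ T) (r : T ⟶ Triangle.mk f g h)
    (hir₂ : (i ≫ r).hom₂ = t) :
    ρ t = ρ f + ρ g :=
  rank_eq_rank_mor₁_add_rank_mor₂_of_retract ρ hM2 hM3 hM4 hM5 hT i r t hir₂ ht hft htg

/-- a rank function extends to the idempotent completion; in particular,
for an exact triangle ((X,e),(Y,t),(Z,k),f,g,h) in the idempotent completion (i.e. a
triangle of morphisms compatible with the idempotents which is a retract, with
retraction given by the idempotents, of a distinguished triangle of C), one has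
ρ(t) = ρ(f) + ρ(g), where ρ(t) is the rank of the identity of (Y,t). -/
theorem rank_idempotent_completion (ρ : ∀ ⦃X Y : C⦄, (X ⟶ Y) → ℝ)
    (hnonneg : ∀ ⦃X Y : C⦄ (f : X ⟶ Y), 0 ≤ ρ f)
    (hM1 : ∀ ⦃X Y : C⦄ (f : X ⟶ Y), ρ (f⟦(1 : ℤ)⟧') = ρ f)
    (hM2 : ∀ ⦃X Y X' Y' : C⦄ (f : X ⟶ Y) (g : X' ⟶ Y'),
      ρ (biprod.map f g) = ρ f + ρ g)
    (hM3 : ∀ T ∈ distTriang C, ρ T.mor₁ + ρ T.mor₂ = ρ (𝟙 T.obj₂))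
    (hM4 : ∀ ⦃X Y Z W : C⦄ (f : X ⟶ Y) (g : Z ⟶ W) (h : Z ⟶ Y),
      ρ f + ρ g ≤ ρ (biprod.map f g + biprod.snd ≫ h ≫ biprod.inl))
    (hM5 : ∀ ⦃X Y Z : C⦄ (f : X ⟶ Y) (g : Y ⟶ Z),
      ρ (f ≫ g) ≤ ρ f ∧ ρ (f ≫ g) ≤ ρ g)
    {X Y Z : C} (e : X ⟶ X) (t : Y ⟶ Y) (k : Z ⟶ Z)
    (he : e ≫ e = e) (ht : t ≫ t = t) (hk : k ≫ k = k)
    (f : X ⟶ Y) (g : Y ⟶ Z) (h : Z ⟶ X⟦(1 : ℤ)⟧)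
    (hef : e ≫ f = f) (hft : f ≫ t = f) (htg : t ≫ g = g) (hgk : g ≫ k = g)
    (hkh : k ≫ h = h) (hhe : h ≫ e⟦(1 : ℤ)⟧' = h)
    (T : Triangle C) (hT : T ∈ distTriang C)
    (i : Triangle.mk f g h ⟶ T) (r : T ⟶ Triangle.mk f g h)
    (hir₁ : (i ≫ r).hom₁ = e) (hir₂ : (i ≫ r).hom₂ = t) (hir₃ : (i ≫ r).hom₃ = k) :
    ρ t = ρ f + ρ g :=
  rank_idempotent_completion_general ρ hM2 hM3 hM4 hM5 t ht f g h hft htg T hT i r hir₂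
end

section
/- Let C be a triangulated category in which every exact triangle splits and which is generated by a single nonzero indecomposable object X. Then the graded endomorphism ring End*(X) = ⊕_n Hom(X, Σⁿ X) is a graded skew-field: every nonzero homogeneous element is invertible. -/
/-!
Complete a nonzero `f : X ⟶ X⟦n⟧` to a distinguished triangle and split it into a direct sum of
triangles each having an invertible arrow. In every summand the composites of consecutive arrows
vanish, so an invertible second or third arrow forces the first one to be zero; hence in a summand
where the component of `f` is nonzero, that component is invertible. Since `X` and `X⟦n⟧` are
indecomposable, all the other summands have zero first and second objects, so `f` is invertible.
-/

open CategoryTheory CategoryTheory.Limits CategoryTheory.Pretriangulated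

variable {C : Type*} [Category C] [Preadditive C] [HasZeroObject C]
  [HasShift C ℤ] [∀ n : ℤ, (CategoryTheory.shiftFunctor C n).Additive] [Pretriangulated C]
  [HasFiniteBiproducts C]

/-- A triangle one of whose three arrows is an isomorphism. -/
def HasIsoArrow (T : Triangle C) : Prop :=
  IsIso T.mor₁ ∨ IsIso T.mor₂ ∨ IsIso T.mor₃

/-- A triangle is split if it is isomorphic to a (finite) direct sum of triangles each
having an isomorphism as one of its arrows. -/
def IsSplitTriangle (T : Triangle C) : Prop :=
  ∃ (n : ℕ) (Ts : Fin n → Triangle C)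
    (φ : (⨁ fun i => (Ts i).obj₃) ⟶ (⨁ fun i => (Ts i).obj₁)⟦(1 : ℤ)⟧),
    (∀ i, HasIsoArrow (Ts i)) ∧
    (∀ i, biproduct.ι (fun i => (Ts i).obj₃) i ≫ φ =
      (Ts i).mor₃ ≫ (biproduct.ι (fun i => (Ts i).obj₁) i)⟦(1 : ℤ)⟧') ∧
    Nonempty (T ≅ Triangle.mk (biproduct.map fun i => (Ts i).mor₁)
      (biproduct.map fun i => (Ts i).mor₂) φ)

/-- A thick-subcategory-style generation predicate: X generates C if the only subclass
of objects containing X and closed under isomorphisms, shifts, extensions and retracts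
is the class of all objects. -/
def GeneratesThickly (X : C) : Prop :=
  ∀ S : Set C,
    (∀ A B : C, (A ≅ B) → A ∈ S → B ∈ S) →
    (∀ A : C, A ∈ S → (A⟦(1 : ℤ)⟧ ∈ S ∧ A⟦(-1 : ℤ)⟧ ∈ S)) →
    (∀ T ∈ distTriang C, T.obj₁ ∈ S → T.obj₂ ∈ S → T.obj₃ ∈ S) →
    (∀ (A B : C) (r : A ⟶ B) (s : B ⟶ A), s ≫ r = 𝟙 B → A ∈ S → B ∈ S) →
    X ∈ S → ∀ A : C, A ∈ S

namespace CategoryTheory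

section Indecomposable

variable {D : Type*} [Category D] [Preadditive D] [HasBinaryBiproducts D]

/-- Unlike the usual convention, the zero object counts as indecomposable. -/
def IsIndecomposable (X : D) : Prop :=
  ∀ A B : D, (X ≅ A ⊞ B) → IsZero A ∨ IsZero B

noncomputable def biproductIsoBiprodSubtypeNe [HasFiniteBiproducts D] {J : Type*} [Finite J]
    [DecidableEq J] (A : J → D) (j : J) :
    (⨁ A) ≅ A j ⊞ ⨁ Subtype.restrict (· ≠ j) A where
  hom := biprod.lift (biproduct.π A j) (biproduct.toSubtype A (· ≠ j))
  inv := biprod.desc (biproduct.ι A j) (biproduct.fromSubtype A (· ≠ j))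
  hom_inv_id := by
    ext i k
    by_cases h : i = j
    · subst h
      simp
    · simp [h, biproduct.ι_π_ne _ (Ne.symm h)]
  inv_hom_id := by
    ext i
    · simp
    · simp
    · simp only [biprod.inr_desc_assoc, Category.assoc, biprod.lift_fst, biproduct.fromSubtype_π]
      simp
    · simp only [biprod.inr_desc_assoc, Category.assoc, biprod.lift_snd,
        biproduct.fromSubtype_toSubtype_assoc]
      simp

lemma IsIndecomposable.isZero_of_ne [HasFiniteBiproducts D] {X : D} (hX : IsIndecomposable X)
    {J : Type*} [Finite J] {A : J → D} (e : X ≅ ⨁ A) {i j : J} (hij : i ≠ j)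
    (hi : ¬IsZero (A i)) : IsZero (A j) := by
  classical
  refine (hX _ _ (e ≪≫ biproductIsoBiprodSubtypeNe A j)).resolve_right fun h => hi ?_
  exact (h.of_mono (biproduct.ι _ _) : IsZero (Subtype.restrict (· ≠ j) A ⟨i, hij⟩))

lemma IsIndecomposable.shift [HasShift D ℤ] [∀ n : ℤ, (shiftFunctor D n).Additive] {X : D}
    (hX : IsIndecomposable X) (n : ℤ) : IsIndecomposable (X⟦n⟧) := by
  intro A B e
  have := preservesBinaryBiproducts_of_preservesBiproducts (shiftFunctor D (-n))
  have e' : X ≅ A⟦-n⟧ ⊞ B⟦-n⟧ :=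
    (shiftShiftNeg X n).symm ≪≫ (shiftFunctor D (-n)).mapIso e ≪≫
      (shiftFunctor D (-n)).mapBiprod A B
  have isZero_of_isZero_shift {Y : D} (h : IsZero (Y⟦-n⟧)) : IsZero Y :=
    ((shiftFunctor D n).map_isZero h).of_iso (shiftNegShift Y n).symm
  exact (hX _ _ e').imp isZero_of_isZero_shift isZero_of_isZero_shift

end Indecomposable

lemma Limits.isIso_biproduct_map_of_isZero_of_ne {D : Type*} [Category D] [HasZeroMorphisms D]
    [HasFiniteBiproducts D] {J : Type*} [Finite J] {A B : J → D} (f : ∀ j, A j ⟶ B j) (j₀ : J)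
    [IsIso (f j₀)] (hA : ∀ j ≠ j₀, IsZero (A j)) (hB : ∀ j ≠ j₀, IsZero (B j)) :
    IsIso (biproduct.map f) := by
  have (j : J) : IsIso (f j) := by
    by_cases hj : j = j₀
    · subst hj
      infer_instance
    · exact ⟨0, (hA j hj).eq_of_src _ _, (hB j hj).eq_of_src _ _⟩
  exact (biproduct.mapIso fun j => asIso (f j)).isIso_hom

namespace Pretriangulated

variable {D : Type*} [Category D] [Preadditive D] [HasZeroObject D] [HasShift D ℤ]
  [∀ n : ℤ, (shiftFunctor D n).Additive] [Pretriangulated D] [HasFiniteBiproducts D]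
  {J : Type*} [Finite J] {Ts : J → Triangle D}
  {φ : (⨁ fun j => (Ts j).obj₃) ⟶ (⨁ fun j => (Ts j).obj₁)⟦(1 : ℤ)⟧}

lemma mor₁_comp_mor₂_eq_zero_of_biproduct_distinguished
    (hS : Triangle.mk (biproduct.map fun j => (Ts j).mor₁)
      (biproduct.map fun j => (Ts j).mor₂) φ ∈ distTriang D) (j : J) :
    (Ts j).mor₁ ≫ (Ts j).mor₂ = 0 := by
  have h : biproduct.map (fun j => (Ts j).mor₁) ≫ biproduct.map (fun j => (Ts j).mor₂) = 0 :=
    comp_distTriang_mor_zero₁₂ _ hS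
  simpa using congr(biproduct.ι _ j ≫ $h ≫ biproduct.π _ j)

lemma mor₃_comp_shift_mor₁_eq_zero_of_biproduct_distinguished
    (hS : Triangle.mk (biproduct.map fun j => (Ts j).mor₁)
      (biproduct.map fun j => (Ts j).mor₂) φ ∈ distTriang D)
    (hφ : ∀ j, biproduct.ι (fun j => (Ts j).obj₃) j ≫ φ =
      (Ts j).mor₃ ≫ (biproduct.ι (fun j => (Ts j).obj₁) j)⟦(1 : ℤ)⟧') (j : J) :
    (Ts j).mor₃ ≫ (Ts j).mor₁⟦(1 : ℤ)⟧' = 0 := by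
  have h : φ ≫ (biproduct.map fun j => (Ts j).mor₁)⟦(1 : ℤ)⟧' = 0 :=
    comp_distTriang_mor_zero₃₁ _ hS
  have := congr(biproduct.ι _ j ≫ $h ≫ (biproduct.π (fun j => (Ts j).obj₂) j)⟦(1 : ℤ)⟧')
  simpa [reassoc_of% hφ j, ← Functor.map_comp] using this

end Pretriangulated

end CategoryTheory

lemma HasIsoArrow.isIso_mor₁ {D : Type*} [Category D] [HasZeroMorphisms D] [HasShift D ℤ]
    {T : Triangle D} (hT : HasIsoArrow T) (h₁₂ : T.mor₁ ≫ T.mor₂ = 0)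
    (h₃₁ : T.mor₃ ≫ T.mor₁⟦(1 : ℤ)⟧' = 0) (h₁ : T.mor₁ ≠ 0) : IsIso T.mor₁ := by
  rcases hT with h | h | h
  · exact h
  · exact absurd ((cancel_mono T.mor₂).1 (h₁₂.trans zero_comp.symm)) h₁
  · refine absurd ((shiftFunctor D (1 : ℤ)).map_injective ?_) h₁
    rw [Functor.map_zero]
    exact (cancel_epi T.mor₃).1 (h₃₁.trans comp_zero.symm)

lemma IsSplitTriangle.isIso_mor₁ {D : Type*} [Category D] [Preadditive D] [HasZeroObject D]
    [HasShift D ℤ] [∀ n : ℤ, (shiftFunctor D n).Additive] [Pretriangulated D]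
    [HasFiniteBiproducts D] {T : Triangle D} (hT : T ∈ distTriang D) (hsplit : IsSplitTriangle T)
    (h₁ : IsIndecomposable T.obj₁) (h₂ : IsIndecomposable T.obj₂) (hne : T.mor₁ ≠ 0) :
    IsIso T.mor₁ := by
  obtain ⟨m, Ts, φ, hiso, hφ, ⟨e⟩⟩ := hsplit
  have hS := isomorphic_distinguished _ hT _ e.symm
  let eArrow : Arrow.mk T.mor₁ ≅ Arrow.mk (biproduct.map fun i => (Ts i).mor₁) :=
    Arrow.isoMk (Triangle.π₁.mapIso e) (Triangle.π₂.mapIso e) e.hom.comm₁.symm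
  obtain ⟨i₀, hi₀⟩ : ∃ i₀, (Ts i₀).mor₁ ≠ 0 := by
    by_contra! h
    have : biproduct.map (fun i => (Ts i).mor₁) = 0 := by ext; simp [h]
    exact hne (by simp [Arrow.iso_w' eArrow.symm, this])
  have := (hiso i₀).isIso_mor₁ (mor₁_comp_mor₂_eq_zero_of_biproduct_distinguished hS i₀)
    (mor₃_comp_shift_mor₁_eq_zero_of_biproduct_distinguished hS hφ i₀) hi₀
  refine ((MorphismProperty.isomorphisms D).arrow_mk_iso_iff eArrow).2 ?_
  exact isIso_biproduct_map_of_isZero_of_ne _ i₀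
    (fun i hi => h₁.isZero_of_ne (Triangle.π₁.mapIso e) (Ne.symm hi) fun h => hi₀ (h.eq_of_src _ _))
    (fun i hi => h₂.isZero_of_ne (Triangle.π₂.mapIso e) (Ne.symm hi) fun h => hi₀ (h.eq_of_tgt _ _))

theorem graded_endomorphisms_skew_field_of_simple_general
    (hsplit : ∀ T ∈ distTriang C, IsSplitTriangle T)
    (X : C)
    (hind : ∀ A B : C, (X ≅ A ⊞ B) → IsZero A ∨ IsZero B) :
    ∀ (n : ℤ) (f : X ⟶ X⟦n⟧), f ≠ 0 → IsIso f := by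
  intro n f hf
  obtain ⟨_, _, _, hT⟩ := distinguished_cocone_triangle f
  exact (hsplit _ hT).isIso_mor₁ hT hind (IsIndecomposable.shift hind n) hf

/-- in a simple triangulated category (every exact triangle splits,
generated by a nonzero indecomposable X), every nonzero homogeneous element of the
graded endomorphism ring of X, i.e. every nonzero f : X ⟶ ΣⁿX, is invertible; thus
End*(X) is a graded skew-field. -/
theorem graded_endomorphisms_skew_field_of_simple
    (hsplit : ∀ T ∈ distTriang C, IsSplitTriangle T)
    (X : C) (hX : ¬ IsZero X)
    (hind : ∀ A B : C, (X ≅ A ⊞ B) → IsZero A ∨ IsZero B)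
    (hgen : GeneratesThickly X) :
    ∀ (n : ℤ) (f : X ⟶ X⟦n⟧), f ≠ 0 → IsIso f :=
  graded_endomorphisms_skew_field_of_simple_general hsplit X hind
end

section
/- Let K be a ℤ-graded skew-field (every nonzero homogeneous element invertible) with K ≠ K₀. Let d be the smallest positive integer such that K_d ≠ 0, and let t ∈ K_d be nonzero. Then K is concentrated in degrees divisible by d, K is isomorphic as a left K₀-module to K₀[t, t⁻¹], and there is an automorphism σ of the skew-field K₀ such that t·a = σ(a)·t for all a ∈ K₀. -/
/-- structure of graded skew-fields.  If K is a ℤ-graded skew-field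
(all nonzero homogeneous elements invertible) with K ≠ K₀, and d is the smallest
positive integer with K_d ≠ 0, witnessed by a nonzero t ∈ K_d, then K is concentrated
in degrees divisible by d, K ≅ K₀[t,t⁻¹] as a left K₀-module (every homogeneous element
of degree d·m is a·tᵐ with a of degree 0), and there is a ring automorphism σ of the
skew-field K₀ with t·a = σ(a)·t for all a ∈ K₀. -/
theorem graded_skew_field_structure (K : Type*) [Ring K]
    (𝒜 : ℤ → AddSubgroup K) [GradedRing 𝒜]
    (hsf : ∀ (n : ℤ) (a : K), a ∈ 𝒜 n → a ≠ 0 → IsUnit a)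
    (hne : ∃ (n : ℤ), n ≠ 0 ∧ ∃ a ∈ 𝒜 n, a ≠ 0)
    (d : ℕ) (hd : 0 < d)
    (hmin : ∀ m : ℕ, 0 < m → m < d → ∀ a ∈ 𝒜 (m : ℤ), a = 0)
    (t : K) (ht : t ∈ 𝒜 (d : ℤ)) (ht0 : t ≠ 0) :
    (∀ n : ℤ, ¬ ((d : ℤ) ∣ n) → ∀ a ∈ 𝒜 n, a = 0) ∧
    (∃ u : Kˣ, (u : K) = t ∧
      ∀ m : ℤ, ∀ b ∈ 𝒜 ((d : ℤ) * m), ∃ a ∈ 𝒜 0, b = a * ((u ^ m : Kˣ) : K)) ∧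
    (∃ σ : (𝒜 0) ≃+* (𝒜 0), ∀ a : 𝒜 0, t * (a : K) = ((σ a : 𝒜 0) : K) * t) := by
  obtain ⟨u, hu⟩ := hsf d t ht ht0
  set v : K := ((u⁻¹ : Kˣ) : K) with hv
  have htv : t * v = 1 := by rw [← hu, Units.mul_inv]
  have hvt : v * t = 1 := by rw [← hu, Units.inv_mul]
  have h1 : (DirectSum.decompose 𝒜 (t * v) ((d:ℤ) + (-d)) : K)
      = t * (DirectSum.decompose 𝒜 v (-(d:ℤ)) : K) :=
    DirectSum.coe_decompose_mul_add_of_left_mem 𝒜 ht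
  rw [htv, add_neg_cancel, DirectSum.decompose_of_mem_same 𝒜 (SetLike.one_mem_graded 𝒜)] at h1
  have hvmem : v ∈ 𝒜 (-(d:ℤ)) := by
    have hve : v = (DirectSum.decompose 𝒜 v (-(d:ℤ)) : K) := by
      calc v = v * (t * (DirectSum.decompose 𝒜 v (-(d:ℤ)) : K)) := by rw [← h1, mul_one]
        _ = (v * t) * _ := by rw [mul_assoc]
        _ = _ := by rw [hvt, one_mul]
    rw [hve]; exact SetLike.coe_mem _
  -- zpow membership
  have hz : ∀ m : ℤ, ((u ^ m : Kˣ) : K) ∈ 𝒜 ((d:ℤ) * m) := by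
    intro m
    cases m with
    | ofNat k =>
      have : ((u ^ (k : ℤ) : Kˣ) : K) = t ^ k := by
        rw [zpow_natCast, Units.val_pow_eq_pow_val, hu]
      rw [Int.ofNat_eq_natCast, this]
      have := SetLike.pow_mem_graded k ht
      have hidx : k • (d : ℤ) = (d : ℤ) * (k : ℤ) := by
        simp [nsmul_eq_mul, mul_comm]
      rwa [hidx] at this
    | negSucc k =>
      have hval : ((u ^ Int.negSucc k : Kˣ) : K) = v ^ (k + 1) := by
        rw [zpow_negSucc, ← inv_pow, Units.val_pow_eq_pow_val]
      have hmem := SetLike.pow_mem_graded (k + 1) hvmem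
      have hidx : (k + 1) • (-(d : ℤ)) = (d : ℤ) * Int.negSucc k := by
        rw [Int.negSucc_eq]; push_cast [nsmul_eq_mul]; ring
      rw [hval, ← hidx]; exact hmem
  refine ⟨?_, ⟨u, hu, ?_⟩, ?_⟩
  · -- concentration
    intro n hn a ha
    set q : ℤ := n / d with hq
    set r : ℤ := n % d with hr
    have hr0 : 0 ≤ r := Int.emod_nonneg n (by exact_mod_cast hd.ne')
    have hrd : r < d := Int.emod_lt_of_pos n (by exact_mod_cast hd)
    have hrne : r ≠ 0 := fun h => hn (Int.dvd_of_emod_eq_zero h)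
    have hcm : a * ((u ^ (-q) : Kˣ) : K) ∈ 𝒜 (n + (d:ℤ) * (-q)) :=
      SetLike.mul_mem_graded ha (hz (-q))
    have hidx : n + (d:ℤ) * (-q) = r := by rw [hr, Int.emod_def]; ring
    rw [hidx] at hcm
    have hrnat : ((r.toNat : ℕ) : ℤ) = r := Int.toNat_of_nonneg hr0
    have hczero : a * ((u ^ (-q) : Kˣ) : K) = 0 := by
      apply hmin r.toNat (by omega) (by omega)
      rwa [hrnat]
    have : a = a * ((u ^ (-q) : Kˣ) : K) * ((u ^ q : Kˣ) : K) := by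
      rw [mul_assoc, ← Units.val_mul, ← zpow_add, neg_add_cancel, zpow_zero, Units.val_one,
        mul_one]
    rw [this, hczero, zero_mul]
  · -- laurent structure
    intro m b hb
    refine ⟨b * ((u ^ (-m) : Kˣ) : K), ?_, ?_⟩
    · have := SetLike.mul_mem_graded hb (hz (-m))
      have hidx : (d:ℤ) * m + (d:ℤ) * (-m) = 0 := by ring
      rwa [hidx] at this
    · rw [mul_assoc, ← Units.val_mul, ← zpow_add, neg_add_cancel, zpow_zero, Units.val_one,
        mul_one]
  · -- automorphism
    have mem0 : ∀ x : K, x ∈ 𝒜 0 → t * x * v ∈ 𝒜 0 := by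
      intro x hx
      have := SetLike.mul_mem_graded (SetLike.mul_mem_graded ht hx) hvmem
      simpa using this
    have mem0' : ∀ x : K, x ∈ 𝒜 0 → v * x * t ∈ 𝒜 0 := by
      intro x hx
      have := SetLike.mul_mem_graded (SetLike.mul_mem_graded hvmem hx) ht
      simpa using this
    refine ⟨{
      toFun := fun a => ⟨t * (a : K) * v, mem0 _ a.2⟩
      invFun := fun a => ⟨v * (a : K) * t, mem0' _ a.2⟩
      left_inv := ?_
      right_inv := ?_
      map_mul' := ?_
      map_add' := ?_ }, ?_⟩
    · intro a
      ext
      show v * (t * (a : K) * v) * t = (a : K)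
      rw [show v * (t * (a : K) * v) * t = (v * t) * (a : K) * (v * t) by noncomm_ring, hvt,
        one_mul, mul_one]
    · intro a
      ext
      show t * (v * (a : K) * t) * v = (a : K)
      rw [show t * (v * (a : K) * t) * v = (t * v) * (a : K) * (t * v) by noncomm_ring, htv,
        one_mul, mul_one]
    · intro a b
      ext
      show t * ((a : K) * (b : K)) * v = (t * (a : K) * v) * (t * (b : K) * v)
      rw [show (t * (a : K) * v) * (t * (b : K) * v) = t * (a : K) * (v * t) * (b : K) * v by
        noncomm_ring, hvt]
      noncomm_ring
    · intro a b
      ext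
      show t * ((a : K) + (b : K)) * v = t * (a : K) * v + t * (b : K) * v
      noncomm_ring
    · intro a
      show t * (a : K) = (t * (a : K) * v) * t
      rw [mul_assoc (t * (a : K)) v t, hvt, mul_one]
end

section
/- Let A be a dg algebra, X a perfect cofibrant A-module, and B an A-algebra (dg algebra with a map A → B). Then B is X-local as an A-module, i.e. RHom_A(X, B) ≃ 0, if and only if X ⊗^L_A B ≃ 0. -/
open TensorProduct

/-- underived shadow for a perfect module concentrated in degree 0, where
RHom = Hom and ⊗^L = ⊗ since X is projective: for a finitely generated projective
A-module X and an A-algebra B, RHom_A(X,B) ≃ 0 iff X ⊗^L_A B ≃ 0. -/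
theorem local_iff_tensor_vanishes (A : Type*) [CommRing A] (B : Type*) [Ring B]
    [Algebra A B] (X : Type*) [AddCommGroup X] [Module A X]
    [Module.Finite A X] [Module.Projective A X] :
    (∀ φ : X →ₗ[A] B, φ = 0) ↔ Subsingleton (X ⊗[A] B) := by
  constructor
  · intro h
    -- get a finite free presentation with a section
    obtain ⟨n, π, hπ⟩ := Module.Finite.exists_fin' A X
    obtain ⟨s, hs⟩ := Module.projective_lifting_property π (LinearMap.id) hπ
    -- every pure tensor vanishes
    have key : ∀ (x : X) (b : B), (x ⊗ₜ[A] b : X ⊗[A] B) = 0 := by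
      intro x b
      have hx : x = π (s x) := by
        have := congrArg (fun f => f x) hs; simpa using this.symm
      have hsx : (s x : Fin n → A) = ∑ i, (s x i) • (Pi.single i 1 : Fin n → A) := by
        ext j
        simp [Finset.sum_apply, Pi.single_apply]
      have hzero : ∀ i : Fin n, algebraMap A B (s x i) = 0 := by
        intro i
        have := h ((Algebra.linearMap A B).comp ((LinearMap.proj i).comp s))
        have := congrArg (fun f => f x) this
        simpa using this
      calc x ⊗ₜ[A] b = (π (∑ i, (s x i) • (Pi.single i 1 : Fin n → A))) ⊗ₜ[A] b := by
            rw [← hsx, ← hx]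
        _ = (∑ i, (s x i) • π (Pi.single i 1 : Fin n → A)) ⊗ₜ[A] b := by
            rw [map_sum]; simp [map_smul]
        _ = ∑ i, ((s x i) • π (Pi.single i 1 : Fin n → A)) ⊗ₜ[A] b := by
            rw [TensorProduct.sum_tmul]
        _ = ∑ i, π (Pi.single i 1 : Fin n → A) ⊗ₜ[A] ((s x i) • b) := by
            simp [TensorProduct.smul_tmul]
        _ = 0 := by
            refine Finset.sum_eq_zero fun i _ => ?_
            rw [Algebra.smul_def, hzero i, zero_mul, TensorProduct.tmul_zero]
    constructor
    intro t u
    have hz : ∀ v : X ⊗[A] B, v = 0 := by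
      intro v
      induction v using TensorProduct.induction_on with
      | zero => rfl
      | tmul x b => exact key x b
      | add a b ha hb => rw [ha, hb, add_zero]
    rw [hz t, hz u]
  · intro h φ
    ext x
    -- build ψ : X ⊗ B → B sending x ⊗ b to φ x * b
    let bil : X →ₗ[A] B →ₗ[A] B :=
      { toFun := fun x =>
        { toFun := fun b => φ x * b
          map_add' := fun a b => by simp [mul_add]
          map_smul' := fun r b => by
            dsimp
            rw [Algebra.smul_def, Algebra.smul_def, ← mul_assoc, ← mul_assoc,
              Algebra.commutes] }
        map_add' := fun a b => by ext c; simp [add_mul]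
        map_smul' := fun r a => by
          ext c; simp [Algebra.smul_def, mul_assoc] }
    let ψ := TensorProduct.lift bil
    have : ψ (x ⊗ₜ[A] 1) = ψ 0 := by rw [Subsingleton.elim (x ⊗ₜ[A] (1:B)) 0]
    simpa [ψ, bil] using this
end

section
/- Let A be an ordinary ring and ρ a Sylvester rank function on A (defined on morphisms of finitely generated projective modules). Then for every bounded exact complex X of finitely generated projective A-modules with differentials d_n : X_n → X_{n−1}, one has ρ(X_n) = ρ(d_n) + ρ(d_{n+1}) for all n. -/
open CategoryTheory CategoryTheory.Limits

/-- A finitely generated projective module, i.e. an object of proj(A). -/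
def IsFGProj (A : Type) [Ring A] (P : ModuleCat.{0} A) : Prop :=
  Module.Finite A P ∧ Module.Projective A P

/-!
Write `K n` for the image of `d n`. Exactness makes `X (n + 1)` an extension of `K n` by
`K (n + 1)`. Below the support of the complex every `K n` vanishes, and inductively upwards each
`K n` is projective, so these extensions split: `X (n + 1) ≅ K (n + 1) ⊕ K n`, and additivity gives
`ρ (X (n + 1)) = ρ (K (n + 1)) + ρ (K n)`. Finally `d n` factors as a split epimorphism onto `K n`
followed by a split monomorphism, and the composition inequality alone forces `ρ (d n) = ρ (K n)`.
-/

def RankCompLeMin {C : Type*} [Category C] (p : C → Prop) (ρ : ∀ ⦃P Q : C⦄, (P ⟶ Q) → ℝ) :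
    Prop :=
  ∀ ⦃P Q R : C⦄ (f : P ⟶ Q) (g : Q ⟶ R), p P → p Q → p R → ρ (f ≫ g) ≤ ρ f ∧ ρ (f ≫ g) ≤ ρ g

namespace RankCompLeMin

variable {C : Type*} [Category C] {p : C → Prop} {ρ : ∀ ⦃P Q : C⦄, (P ⟶ Q) → ℝ}

theorem le_rank_id (hρ : RankCompLeMin p ρ) {P Q : C} (f : P ⟶ Q) (hP : p P) (hQ : p Q) :
    ρ f ≤ ρ (𝟙 Q) := by
  simpa using (hρ f (𝟙 Q) hP hQ hQ).2

theorem rank_id_eq_of_iso (hρ : RankCompLeMin p ρ) {P Q : C} (e : P ≅ Q) (hP : p P) (hQ : p Q) :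
    ρ (𝟙 P) = ρ (𝟙 Q) := by
  apply le_antisymm
  · calc ρ (𝟙 P) = ρ (e.hom ≫ e.inv) := by rw [e.hom_inv_id]
      _ ≤ ρ e.hom := (hρ _ _ hP hQ hP).1
      _ ≤ ρ (𝟙 Q) := hρ.le_rank_id _ hP hQ
  · calc ρ (𝟙 Q) = ρ (e.inv ≫ e.hom) := by rw [e.inv_hom_id]
      _ ≤ ρ e.inv := (hρ _ _ hQ hP hQ).1
      _ ≤ ρ (𝟙 P) := hρ.le_rank_id _ hQ hP

theorem rank_comp_eq_rank_id (hρ : RankCompLeMin p ρ) {P I Q : C} (e : P ⟶ I) (m : I ⟶ Q)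
    [IsSplitEpi e] [IsSplitMono m] (hP : p P) (hI : p I) (hQ : p Q) :
    ρ (e ≫ m) = ρ (𝟙 I) := by
  apply le_antisymm
  · exact ((hρ e m hP hI hQ).1).trans (hρ.le_rank_id e hP hI)
  · calc ρ (𝟙 I) = ρ ((section_ e ≫ e ≫ m) ≫ retraction m) := by simp
      _ ≤ ρ (section_ e ≫ e ≫ m) := (hρ _ _ hI hQ hI).1
      _ ≤ ρ (e ≫ m) := (hρ _ _ hI hP hQ).2

end RankCompLeMin

theorem rank_id_biprod {C : Type*} [Category C] [Preadditive C] [HasBinaryBiproducts C]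
    {p : C → Prop} {ρ : ∀ ⦃P Q : C⦄, (P ⟶ Q) → ℝ}
    (hadd : ∀ ⦃P Q P' Q' : C⦄ (f : P ⟶ Q) (g : P' ⟶ Q'), p P → p Q → p P' → p Q' →
      ρ (biprod.map f g) = ρ f + ρ g)
    {P Q : C} (hP : p P) (hQ : p Q) : ρ (𝟙 (P ⊞ Q)) = ρ (𝟙 P) + ρ (𝟙 Q) := by
  rw [← hadd _ _ hP hP hQ hQ]
  congr 1
  ext <;> simp

namespace Function.Exact

variable {R M N P : Type*} [Ring R] [AddCommGroup M] [AddCommGroup N] [AddCommGroup P]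
  [Module R M] [Module R N] [Module R P] {f : M →ₗ[R] N} {g : N →ₗ[R] P}

theorem range_subtype_rangeRestrict (h : Function.Exact f g) :
    Function.Exact (LinearMap.range f).subtype g.rangeRestrict := by
  rw [LinearMap.exact_iff, LinearMap.ker_rangeRestrict, Submodule.range_subtype,
    LinearMap.exact_iff.mp h]

theorem exists_linearEquiv_range_prod_range (h : Function.Exact f g)
    [Module.Projective R (LinearMap.range g)] :
    ∃ e : N ≃ₗ[R] LinearMap.range f × LinearMap.range g,
      ∀ x : LinearMap.range f, e x = (x, 0) := by
  obtain ⟨l, hl⟩ := Module.projective_lifting_property g.rangeRestrict LinearMap.id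
    g.surjective_rangeRestrict
  obtain ⟨e, he, -⟩ := h.range_subtype_rangeRestrict.splitSurjectiveEquiv
    (Submodule.injective_subtype _) ⟨l, hl⟩
  refine ⟨e, fun x => ?_⟩
  rw [← e.eq_symm_apply]
  exact LinearMap.congr_fun he x

end Function.Exact

namespace IsFGProj

variable {A : Type} [Ring A]

theorem of_iso {P Q : ModuleCat.{0} A} (e : P ≅ Q) (hP : IsFGProj A P) : IsFGProj A Q :=
  have := hP.1; have := hP.2
  ⟨Module.Finite.equiv e.toLinearEquiv, Module.Projective.of_equiv e.toLinearEquiv⟩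

theorem of_subsingleton (P : ModuleCat.{0} A) [Subsingleton P] : IsFGProj A P :=
  ⟨inferInstance, Module.Projective.of_free⟩

end IsFGProj

section Complex

open LinearMap (range)

variable {A : Type} [Ring A] {M N P : ModuleCat.{0} A} {f : M ⟶ N} {g : N ⟶ P}

theorem Function.Exact.isFGProj_range (h : Function.Exact f.hom g.hom)
    [Module.Projective A (range g.hom)] (hN : IsFGProj A N) :
    IsFGProj A (ModuleCat.of A (range f.hom)) := by
  obtain ⟨e, he⟩ := h.exists_linearEquiv_range_prod_range
  have hr : (LinearMap.fst A _ _ ∘ₗ e.toLinearMap) ∘ₗ (range f.hom).subtype = LinearMap.id :=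
    LinearMap.ext fun x => by simp [he]
  have := hN.1; have := hN.2
  exact ⟨Module.Finite.of_surjective _ (LinearMap.surjective_of_comp_eq_id _ _ hr),
    Module.Projective.of_split _ _ hr⟩

theorem RankCompLeMin.rank_eq_rank_id_range {ρ : ∀ ⦃P Q : ModuleCat.{0} A⦄, (P ⟶ Q) → ℝ}
    (hρ : RankCompLeMin (IsFGProj A) ρ) (h : Function.Exact f.hom g.hom)
    [Module.Projective A (range g.hom)] (hM : IsFGProj A M) (hN : IsFGProj A N) :
    ρ f = ρ (𝟙 (ModuleCat.of A (range f.hom))) := by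
  have hK := h.isFGProj_range hN
  have := hK.2
  obtain ⟨s, hs⟩ := Module.projective_lifting_property f.hom.rangeRestrict LinearMap.id
    f.hom.surjective_rangeRestrict
  obtain ⟨e, he⟩ := h.exists_linearEquiv_range_prod_range
  have : IsSplitEpi (ModuleCat.ofHom f.hom.rangeRestrict) :=
    .mk' ⟨ModuleCat.ofHom s, ModuleCat.hom_ext hs⟩
  have : IsSplitMono (ModuleCat.ofHom (range f.hom).subtype) :=
    .mk' ⟨ModuleCat.ofHom (LinearMap.fst A _ _ ∘ₗ e.toLinearMap),
      ModuleCat.hom_ext <| LinearMap.ext fun x => by simp [he]⟩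
  exact hρ.rank_comp_eq_rank_id (ModuleCat.ofHom f.hom.rangeRestrict)
    (ModuleCat.ofHom (range f.hom).subtype) hM hK hN

theorem Function.Exact.rank_id_eq_add {ρ : ∀ ⦃P Q : ModuleCat.{0} A⦄, (P ⟶ Q) → ℝ}
    (hρ : RankCompLeMin (IsFGProj A) ρ)
    (hadd : ∀ ⦃P Q P' Q' : ModuleCat.{0} A⦄ (f : P ⟶ Q) (g : P' ⟶ Q'),
      IsFGProj A P → IsFGProj A Q → IsFGProj A P' → IsFGProj A Q' →
      ρ (biprod.map f g) = ρ f + ρ g)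
    (h : Function.Exact f.hom g.hom) (hN : IsFGProj A N)
    (hL : IsFGProj A (ModuleCat.of A (range g.hom))) :
    ρ (𝟙 N) = ρ (𝟙 (ModuleCat.of A (range f.hom))) + ρ (𝟙 (ModuleCat.of A (range g.hom))) := by
  have := hL.2
  obtain ⟨e, -⟩ := h.exists_linearEquiv_range_prod_range
  let iso : N ≅ ModuleCat.of A (range f.hom) ⊞ ModuleCat.of A (range g.hom) :=
    e.toModuleIso ≪≫ (ModuleCat.biprodIsoProd (.of A (range f.hom)) (.of A (range g.hom))).symm
  rw [hρ.rank_id_eq_of_iso iso hN (hN.of_iso iso),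
    rank_id_biprod hadd (h.isFGProj_range hN) hL]

theorem isFGProj_range_of_exact_of_bounded (X : ℤ → ModuleCat.{0} A)
    (d : ∀ n : ℤ, X (n + 1) ⟶ X n) (hfgp : ∀ n : ℤ, IsFGProj A (X n))
    (hexact : ∀ n : ℤ, Function.Exact (d (n + 1)).hom (d n).hom)
    (hbounded : ∃ N : ℕ, ∀ n : ℤ, (N : ℤ) < |n| → Subsingleton (X n)) (k : ℤ) :
    IsFGProj A (ModuleCat.of A (range (d k).hom)) := by
  obtain ⟨N, hN⟩ := hbounded
  have outside : ∀ k : ℤ, (N : ℤ) < |k| → IsFGProj A (ModuleCat.of A (range (d k).hom)) :=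
    fun k hk => have := hN k hk; .of_subsingleton _
  rcases lt_or_ge k (-N - 1) with hk | hk
  · exact outside k (by rw [abs_of_neg (by omega)]; omega)
  induction k, hk using Int.leInduction with
  | base => exact outside _ (by rw [abs_of_neg (by omega)]; omega)
  | succ k _ ih =>
    have := ih.2
    exact (hexact k).isFGProj_range (hfgp _)

end Complex

theorem sylvester_rank_of_exact_complex_general (A : Type) [Ring A]
    (ρ : ∀ ⦃P Q : ModuleCat.{0} A⦄, (P ⟶ Q) → ℝ)
    (hadd : ∀ ⦃P Q P' Q' : ModuleCat.{0} A⦄ (f : P ⟶ Q) (g : P' ⟶ Q'),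
      IsFGProj A P → IsFGProj A Q → IsFGProj A P' → IsFGProj A Q' →
      ρ (biprod.map f g) = ρ f + ρ g)
    (hideal : ∀ ⦃P Q R : ModuleCat.{0} A⦄ (f : P ⟶ Q) (g : Q ⟶ R),
      IsFGProj A P → IsFGProj A Q → IsFGProj A R →
      ρ (f ≫ g) ≤ ρ f ∧ ρ (f ≫ g) ≤ ρ g)
    (X : ℤ → ModuleCat.{0} A) (d : ∀ n : ℤ, X (n + 1) ⟶ X n)
    (hfgp : ∀ n : ℤ, IsFGProj A (X n))
    (hexact : ∀ n : ℤ, Function.Exact (d (n + 1)) (d n))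
    (hbounded : ∃ N : ℕ, ∀ n : ℤ, (N : ℤ) < |n| → Subsingleton (X n)) :
    ∀ n : ℤ, ρ (𝟙 (X (n + 1))) = ρ (d n) + ρ (d (n + 1)) := by
  have hρ : RankCompLeMin (IsFGProj A) ρ := hideal
  have hK := isFGProj_range_of_exact_of_bounded X d hfgp hexact hbounded
  have hd (k : ℤ) : ρ (d (k + 1)) = ρ (𝟙 (ModuleCat.of A (LinearMap.range (d (k + 1)).hom))) :=
    have := (hK k).2
    hρ.rank_eq_rank_id_range (hexact k) (hfgp _) (hfgp _)
  intro n
  obtain ⟨m, rfl⟩ : ∃ m, n = m + 1 := ⟨n - 1, by ring⟩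
  rw [(hexact (m + 1)).rank_id_eq_add hρ hadd (hfgp _) (hK _), hd m, hd (m + 1), add_comm]

/-- for a Sylvester morphism rank function ρ on a ring A and a bounded
exact complex X of finitely generated projective A-modules with differentials
d n : X (n+1) ⟶ X n, one has ρ(X_m) = ρ(d_m) + ρ(d_{m+1}) for all m (stated at
m = n+1: ρ(id (X (n+1))) = ρ(d n) + ρ(d (n+1))). -/
theorem sylvester_rank_of_exact_complex (A : Type) [Ring A]
    (ρ : ∀ ⦃P Q : ModuleCat.{0} A⦄, (P ⟶ Q) → ℝ)
    (hnonneg : ∀ ⦃P Q : ModuleCat.{0} A⦄ (f : P ⟶ Q),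
      IsFGProj A P → IsFGProj A Q → 0 ≤ ρ f)
    (hnorm : ρ (𝟙 (ModuleCat.of A A)) = 1)
    (hadd : ∀ ⦃P Q P' Q' : ModuleCat.{0} A⦄ (f : P ⟶ Q) (g : P' ⟶ Q'),
      IsFGProj A P → IsFGProj A Q → IsFGProj A P' → IsFGProj A Q' →
      ρ (biprod.map f g) = ρ f + ρ g)
    (htriangular : ∀ ⦃P Q P' Q' : ModuleCat.{0} A⦄ (f : P ⟶ Q) (g : P' ⟶ Q')
      (h : P' ⟶ Q), IsFGProj A P → IsFGProj A Q → IsFGProj A P' → IsFGProj A Q' →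
      ρ f + ρ g ≤ ρ (biprod.map f g + biprod.snd ≫ h ≫ biprod.inl))
    (hideal : ∀ ⦃P Q R : ModuleCat.{0} A⦄ (f : P ⟶ Q) (g : Q ⟶ R),
      IsFGProj A P → IsFGProj A Q → IsFGProj A R →
      ρ (f ≫ g) ≤ ρ f ∧ ρ (f ≫ g) ≤ ρ g)
    (X : ℤ → ModuleCat.{0} A) (d : ∀ n : ℤ, X (n + 1) ⟶ X n)
    (hfgp : ∀ n : ℤ, IsFGProj A (X n))
    (hexact : ∀ n : ℤ, Function.Exact (d (n + 1)) (d n))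
    (hbounded : ∃ N : ℕ, ∀ n : ℤ, (N : ℤ) < |n| → Subsingleton (X n)) :
    ∀ n : ℤ, ρ (𝟙 (X (n + 1))) = ρ (d n) + ρ (d (n + 1)) :=
  sylvester_rank_of_exact_complex_general A ρ hadd hideal X d hfgp hexact hbounded
end
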